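/- Let G be a finite DAG satisfying degree equality with unique source s and sink t, and let R be a route such that G − R is connected. Then G − R has the same unique source s and unique sink t: no vertex of G − R other than s has indegree zero, and no vertex other than t has outdegree zero. -/

import Mathlib

open Finset

variable {V : Type*} [DecidableEq V] [Fintype V]

/-- The list of directed edges traversed by a list of vertices. -/
def edgeList (l : List V) : List (V × V) := l.zip l.tail

/-- In-degree of a vertex. -/
def indeg (E : Finset (V × V)) (v : V) : ℕ := (E.filter fun e => e.2 = v).card

/-- Out-degree of a vertex. -/
def outdeg (E : Finset (V × V)) (v : V) : ℕ := (E.filter fun e => e.1 = v).card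

/-- A directed graph with edge set `E` is acyclic: no directed cycle returns to a vertex. -/
def Acyclic (E : Finset (V × V)) : Prop :=
  ∀ (v : V) (l : List V), ¬ List.Chain (fun a b => (a, b) ∈ E) v (l ++ [v])

/-- A route: a directed path from `s` to `t` (with at least one edge), recorded as its
list of vertices. -/
def IsRoute (E : Finset (V × V)) (s t : V) (l : List V) : Prop :=
  l.Chain' (fun a b => (a, b) ∈ E) ∧ l.head? = some s ∧ l.getLast? = some t ∧ 2 ≤ l.length

/-- A route decomposition: a set of routes with pairwise disjoint edge sets whose union
is the whole edge set `E`. -/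
def IsRouteDecomp (E : Finset (V × V)) (s t : V) (R : Finset (List V)) : Prop :=
  (∀ l ∈ R, IsRoute E s t l) ∧
  (∀ l ∈ R, ∀ m ∈ R, l ≠ m → ∀ e, e ∈ edgeList l → e ∉ edgeList m) ∧
  (∀ e ∈ E, ∃ l ∈ R, e ∈ edgeList l)

/-- `s` is the unique source of the graph. -/
def UniqueSource (E : Finset (V × V)) (s : V) : Prop :=
  indeg E s = 0 ∧ ∀ v, indeg E v = 0 → v = s

/-- `t` is the unique sink of the graph. -/
def UniqueSink (E : Finset (V × V)) (t : V) : Prop :=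
  outdeg E t = 0 ∧ ∀ v, outdeg E v = 0 → v = t

/-- Degree equality: indegree equals outdegree at every inner vertex. -/
def DegreeEquality (E : Finset (V × V)) (s t : V) : Prop :=
  ∀ v, v ≠ s → v ≠ t → indeg E v = outdeg E v

/-- Undirected adjacency of a directed edge set. -/
def UAdj (E : Finset (V × V)) (a b : V) : Prop := (a, b) ∈ E ∨ (b, a) ∈ E

/-- The vertex set of the graph: `s`, `t`, and all vertices incident to an edge. -/
def VertsOf (E : Finset (V × V)) (s t : V) : Set V :=
  {v | v = s ∨ v = t ∨ ∃ e ∈ E, e.1 = v ∨ e.2 = v}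

/-- The underlying undirected graph is connected (on its vertex set together with `s,t`). -/
def UConnected (E : Finset (V × V)) (s t : V) : Prop :=
  ∀ a ∈ VertsOf E s t, ∀ b ∈ VertsOf E s t, Relation.ReflTransGen (UAdj E) a b

set_option linter.unusedSectionVars false

lemma edgeList_cons_cons (a b : V) (l : List V) :
    edgeList (a :: b :: l) = (a, b) :: edgeList (b :: l) := rfl

lemma mem_E_of_mem_edgeList {E : Finset (V × V)} :
    ∀ {l : List V}, l.Chain' (fun a b => (a, b) ∈ E) → ∀ e ∈ edgeList l, e ∈ E := by
  intro l
  induction l with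
  | nil => intro _ e he; simp [edgeList] at he
  | cons a l ih =>
    cases l with
    | nil => intro _ e he; simp [edgeList] at he
    | cons b l' =>
      intro h e he
      rw [edgeList_cons_cons] at he
      replace h := List.isChain_cons_cons.mp h
      rcases List.mem_cons.mp he with he | he
      · subst he; exact h.1
      · exact ih h.2 e he

lemma map_snd_edgeList (l : List V) : (edgeList l).map Prod.snd = l.tail :=
  List.map_snd_zip (by cases l <;> simp)

lemma map_fst_edgeList : ∀ (l : List V), (edgeList l).map Prod.fst = l.dropLast
  | [] => rfl
  | [_] => rfl
  | a :: b :: l => by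
    rw [edgeList_cons_cons, List.map_cons, map_fst_edgeList (b :: l)]
    rfl

lemma nodup_of_chain' {E : Finset (V × V)} (hA : Acyclic E) :
    ∀ (l : List V), l.Chain' (fun a b => (a, b) ∈ E) → l.Nodup := by
  intro l
  induction l with
  | nil => intro _; exact List.nodup_nil
  | cons a rest ih =>
    intro h
    have hc : List.Chain (fun a b => (a, b) ∈ E) a rest := h
    refine List.nodup_cons.mpr ⟨?_, ih h.tail⟩
    intro hmem
    obtain ⟨r1, r2, rfl⟩ := List.append_of_mem hmem
    have hc' := List.isChain_cons_split.mp hc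
    exact hA a r1 hc'.1

lemma count_edges {α : Type*} [DecidableEq α] (L : List (V × α)) (hL : L.Nodup) (v : α)
    (f : V × α → α) :
    ((L.toFinset.filter (fun e => f e = v)).card) = (L.map f).count v := by
  classical
  rw [show L.toFinset.filter (fun e => f e = v) = (L.filter (fun e => f e = v)).toFinset by
    ext e; simp [List.mem_filter]]
  rw [List.toFinset_card_of_nodup (hL.filter _)]
  rw [List.count_eq_countP]
  rw [List.countP_map]
  rw [← List.countP_eq_length_filter]
  congr 1
lemma card_filter_sdiff (E F : Finset (V × V)) (hFE : F ⊆ E) (p : V × V → Prop)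
    [DecidablePred p] :
    ((E \ F).filter p).card = (E.filter p).card - (F.filter p).card := by
  rw [show (E \ F).filter p = E.filter p \ F.filter p by
    ext e; simp only [Finset.mem_filter, Finset.mem_sdiff]; tauto]
  exact Finset.card_sdiff_of_subset (Finset.filter_subset_filter _ hFE)

/-- if `G - R` is connected then it has the same unique source `s` and
unique sink `t`. -/
theorem deleteRoute_connected_same_source_sink
    (E : Finset (V × V)) (s t : V)
    (hA : Acyclic E) (hst : s ≠ t)
    (hs : UniqueSource E s) (ht : UniqueSink E t)
    (hDE : DegreeEquality E s t)
    (l : List V) (hl : IsRoute E s t l)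
    (hconn : UConnected (E \ (edgeList l).toFinset) s t) :
    (∀ v ∈ VertsOf (E \ (edgeList l).toFinset) s t, v ≠ s →
        0 < indeg (E \ (edgeList l).toFinset) v) ∧
    (∀ v ∈ VertsOf (E \ (edgeList l).toFinset) s t, v ≠ t →
        0 < outdeg (E \ (edgeList l).toFinset) v) := by
  classical
  obtain ⟨hchain, hhead, hlast, hlen⟩ := hl
  set F : Finset (V × V) := (edgeList l).toFinset with hF
  have hFE : F ⊆ E := by
    intro e he
    rw [hF, List.mem_toFinset] at he
    exact mem_E_of_mem_edgeList hchain e he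
  have hnd : l.Nodup := nodup_of_chain' hA l hchain
  have hne : l ≠ [] := by intro h; simp [h] at hhead
  have hLnd : (edgeList l).Nodup := by
    have : ((edgeList l).map Prod.snd).Nodup := by
      rw [map_snd_edgeList]; exact hnd.tail
    exact this.of_map
  have hcons : l = s :: l.tail := by
    conv_lhs => rw [← List.cons_head_tail hne]
    congr 1
    have := List.head?_eq_head hne ▸ hhead
    exact Option.some.inj this
  have hlastl : l.dropLast ++ [t] = l := by
    have h1 : l.getLast hne = t := by
      have := (List.getLast?_eq_getLast hne) ▸ hlast
      exact Option.some.inj this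
    rw [← h1]; exact List.dropLast_append_getLast hne
  -- membership equivalence for inner vertices
  have hmm : ∀ v : V, v ≠ s → v ≠ t → (v ∈ l.tail ↔ v ∈ l.dropLast) := by
    intro v hvs hvt
    constructor
    · intro hv
      have hvl : v ∈ l := List.mem_of_mem_tail hv
      rw [← hlastl] at hvl
      rcases List.mem_append.mp hvl with h | h
      · exact h
      · simp at h; exact absurd h hvt
    · intro hv
      have hvl : v ∈ l := (List.dropLast_sublist l).mem hv
      rw [hcons] at hvl
      rcases List.mem_cons.mp hvl with h | h
      · exact absurd h hvs
      · exact h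
  -- degree counts of F
  have hinF : ∀ v : V, indeg F v = l.tail.count v := by
    intro v
    rw [hF]
    unfold indeg
    rw [count_edges (edgeList l) hLnd v Prod.snd, map_snd_edgeList]
  have houtF : ∀ v : V, outdeg F v = l.dropLast.count v := by
    intro v
    rw [hF]
    unfold outdeg
    rw [count_edges (edgeList l) hLnd v Prod.fst, map_fst_edgeList]
  -- inner degree equality in E \ F
  have hinner : ∀ v : V, v ≠ s → v ≠ t →
      indeg (E \ F) v = outdeg (E \ F) v := by
    intro v hvs hvt
    have h1 : indeg (E \ F) v = indeg E v - indeg F v :=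
      card_filter_sdiff E F hFE _
    have h2 : outdeg (E \ F) v = outdeg E v - outdeg F v :=
      card_filter_sdiff E F hFE _
    have h3 : indeg F v = outdeg F v := by
      rw [hinF, houtF, List.Nodup.count hnd.tail,
        List.Nodup.count (hnd.sublist (List.dropLast_sublist l))]
      simp [hmm v hvs hvt]
    rw [h1, h2, h3, hDE v hvs hvt]
  have hpos_in : ∀ v : V, ∀ e ∈ E \ F, e.2 = v → 0 < indeg (E \ F) v := by
    intro v e he h2
    exact Finset.card_pos.mpr ⟨e, Finset.mem_filter.mpr ⟨he, h2⟩⟩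
  have hpos_out : ∀ v : V, ∀ e ∈ E \ F, e.1 = v → 0 < outdeg (E \ F) v := by
    intro v e he h1
    exact Finset.card_pos.mpr ⟨e, Finset.mem_filter.mpr ⟨he, h1⟩⟩
  have hsmem : s ∈ VertsOf (E \ F) s t := Or.inl rfl
  have htmem : t ∈ VertsOf (E \ F) s t := Or.inr (Or.inl rfl)
  constructor
  · intro v hv hvs
    by_cases hvt : v = t
    · subst hvt
      have hpath := hconn v htmem s hsmem
      rcases Relation.ReflTransGen.cases_head hpath with h | ⟨c, hadj, _⟩
      · exact absurd h.symm hst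
      rcases hadj with hvc | hcv
      · -- (v, c) ∈ E \ F : out-edge of t in E, contradiction with sink
        exfalso
        have hE : (v, c) ∈ E := (Finset.mem_sdiff.mp hvc).1
        have : 0 < outdeg E v :=
          Finset.card_pos.mpr ⟨(v, c), Finset.mem_filter.mpr ⟨hE, rfl⟩⟩
        have h0 := ht.1
        omega
      · exact hpos_in v (c, v) hcv rfl
    · rcases hv with h | h | ⟨e, he, h1 | h2⟩
      · exact absurd h hvs
      · exact absurd h hvt
      · rw [hinner v hvs hvt]; exact hpos_out v e he h1
      · exact hpos_in v e he h2
  · intro v hv hvt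
    by_cases hvs : v = s
    · subst hvs
      have hpath := hconn v hsmem t htmem
      rcases Relation.ReflTransGen.cases_head hpath with h | ⟨c, hadj, _⟩
      · exact absurd h hst
      rcases hadj with hvc | hcv
      · exact hpos_out v (v, c) hvc rfl
      · exfalso
        have hE : (c, v) ∈ E := (Finset.mem_sdiff.mp hcv).1
        have : 0 < indeg E v :=
          Finset.card_pos.mpr ⟨(c, v), Finset.mem_filter.mpr ⟨hE, rfl⟩⟩
        have h0 := hs.1
        omega
    · rcases hv with h | h | ⟨e, he, h1 | h2⟩
      · exact absurd h hvs
      · exact absurd h hvt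
      · exact hpos_out v e he h1
      · rw [← hinner v hvs hvt]; exact hpos_in v e he h2
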